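/- Let x ∈ ℝ^m have support N := {i : x_i ≠ 0} and let y = A x + w ∈ ℝ^n with ‖w‖₂ ≤ ε. Let x̂ be any minimizer of ‖β‖₁ over the set {β ∈ ℝ^m : ‖y − Aβ‖₂ ≤ ε}. If some δ < (√2 − 1)/2 is a 2|N|-restricted isometry bound for A, then ‖x − x̂‖₂ ≤ C₁(δ)·ε ≤ 8.79·ε. -/

import Mathlib

/-
Put `h = x - x̂` and `T = supp x`. Minimality of `‖x̂‖₁` gives the cone condition
`‖h_{Tᶜ}‖₁ ≤ ‖h_T‖₁`, and feasibility of both `x` and `x̂` gives `‖A h‖ ≤ 2ε`. Split `Tᶜ` into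
blocks `T₁, T₂, …` of `|T|` indices in order of decreasing `|hᵢ|`: each entry of a block is at
most the average of the previous block, so `∑_{j ≥ 2} ‖h_{T_j}‖ ≤ ‖h_{Tᶜ}‖₁ / √|T| ≤ ‖h_T‖`.
Testing `A h_{T ∪ T₁}` against `A h` and bounding the cross terms by restricted orthogonality,
which the RIP of order `2|T|` yields with constant `δ`, gives
`(1 - (√2 + 1)δ) ‖h_{T ∪ T₁}‖ ≤ √(1 + δ) ‖A h‖`; finally `‖h‖ ≤ 2 ‖h_{T ∪ T₁}‖`.
-/

open Finset

attribute [local instance] Classical.propDecidable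

/-- Euclidean (ℓ2) norm of a finite real vector. -/
noncomputable def norm2 {k : ℕ} (v : Fin k → ℝ) : ℝ := Real.sqrt (∑ i, v i ^ 2)

/-- ℓ∞ norm (maximum absolute entry) of a finite real vector. -/
noncomputable def normInf {k : ℕ} (v : Fin k → ℝ) : ℝ := ⨆ i, |v i|

/-- Support of a vector, as a finset. -/
noncomputable def spt {k : ℕ} (v : Fin k → ℝ) : Finset (Fin k) :=
  Finset.univ.filter (fun i => v i ≠ 0)

/-- Restriction of a vector to the coordinates indexed by `T` (zero elsewhere). -/
noncomputable def restr {k : ℕ} (T : Finset (Fin k)) (v : Fin k → ℝ) : Fin k → ℝ :=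
  fun i => if i ∈ T then v i else 0

/-- `δ ∈ [0,1)` is an `S`-restricted isometry bound for `A`:
`(1-δ)‖z‖² ≤ ‖Az‖² ≤ (1+δ)‖z‖²` for every `z` with at most `S` nonzero entries. -/
def RIPBound {n m : ℕ} (A : Matrix (Fin n) (Fin m) ℝ) (S : ℕ) (δ : ℝ) : Prop :=
  0 ≤ δ ∧ δ < 1 ∧
    ∀ z : Fin m → ℝ, (spt z).card ≤ S →
      (1 - δ) * (∑ i, z i ^ 2) ≤ (∑ j, (A.mulVec z) j ^ 2) ∧
      (∑ j, (A.mulVec z) j ^ 2) ≤ (1 + δ) * (∑ i, z i ^ 2)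

/-- `θ ≥ 0` is an `(S,S')`-restricted orthogonality bound for `A`:
`|⟨Az, Az'⟩| ≤ θ‖z‖‖z'‖` for all `z, z'` with disjoint supports of cardinalities `≤ S, S'`. -/
def ROBound {n m : ℕ} (A : Matrix (Fin n) (Fin m) ℝ) (S S' : ℕ) (θ : ℝ) : Prop :=
  0 ≤ θ ∧
    ∀ z z' : Fin m → ℝ, Disjoint (spt z) (spt z') →
      (spt z).card ≤ S → (spt z').card ≤ S' →
      |∑ j, (A.mulVec z) j * (A.mulVec z') j| ≤ θ * norm2 z * norm2 z'

/-- A modified-CS estimate with known part `T`: feasible and with minimal ℓ1 norm outside `T`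
among all feasible vectors. -/
def ModCS {n m : ℕ} (A : Matrix (Fin n) (Fin m) ℝ) (y : Fin n → ℝ) (ε : ℝ)
    (T : Finset (Fin m)) (xhat : Fin m → ℝ) : Prop :=
  norm2 (fun j => y j - (A.mulVec xhat) j) ≤ ε ∧
    ∀ β : Fin m → ℝ, norm2 (fun j => y j - (A.mulVec β) j) ≤ ε →
      ∑ i ∈ Tᶜ, |xhat i| ≤ ∑ i ∈ Tᶜ, |β i|

/-- The LS estimate on `T` from `y`: supported on `T` and satisfying the normal equations
`A_Tᵀ (y - A x̂) = 0` (equivalently `x̂_T = (A_Tᵀ A_T)⁻¹ A_Tᵀ y` when `A_T` has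
full column rank). -/
def IsLS {n m : ℕ} (A : Matrix (Fin n) (Fin m) ℝ) (y : Fin n → ℝ)
    (T : Finset (Fin m)) (xhat : Fin m → ℝ) : Prop :=
  (∀ i, i ∉ T → xhat i = 0) ∧
    ∀ i ∈ T, (∑ j, A j i * (y j - (A.mulVec xhat) j)) = 0

/-- `C₁(δ) = 4√(1+δ)/(1-(√2+1)δ)`. -/
noncomputable def C1 (δ : ℝ) : ℝ := 4 * Real.sqrt (1 + δ) / (1 - (Real.sqrt 2 + 1) * δ)

/-- `C₂(δ) = 2(1+(√2-1)δ)/(1-(√2+1)δ)`. -/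
noncomputable def C2 (δ : ℝ) : ℝ := 2 * (1 + (Real.sqrt 2 - 1) * δ) / (1 - (Real.sqrt 2 + 1) * δ)

open Matrix Function

section Support

variable {k : ℕ}

lemma norm2_eq_norm (v : Fin k → ℝ) :
    norm2 v = ‖(WithLp.toLp 2 v : EuclideanSpace ℝ (Fin k))‖ := by
  simp [norm2, EuclideanSpace.norm_eq]

lemma norm2_nonneg (v : Fin k → ℝ) : 0 ≤ norm2 v := Real.sqrt_nonneg _

lemma sq_norm2 (v : Fin k → ℝ) : norm2 v ^ 2 = v ⬝ᵥ v := by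
  rw [norm2, Real.sq_sqrt (by positivity)]
  simp [dotProduct, sq]

lemma norm2_eq_zero {v : Fin k → ℝ} : norm2 v = 0 ↔ v = 0 := by
  simp [norm2_eq_norm]

lemma norm2_smul (c : ℝ) (v : Fin k → ℝ) : norm2 (c • v) = |c| * norm2 v := by
  simp [norm2_eq_norm, WithLp.toLp_smul, norm_smul]

lemma norm2_add_le (u v : Fin k → ℝ) : norm2 (u + v) ≤ norm2 u + norm2 v := by
  simpa [norm2_eq_norm] using
    norm_add_le (WithLp.toLp 2 u : EuclideanSpace ℝ (Fin k)) (WithLp.toLp 2 v)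

lemma norm2_sub_le (u v : Fin k → ℝ) : norm2 (u - v) ≤ norm2 u + norm2 v := by
  simpa [norm2_eq_norm] using
    norm_sub_le (WithLp.toLp 2 u : EuclideanSpace ℝ (Fin k)) (WithLp.toLp 2 v)

lemma norm2_sum_le {ι : Type*} (s : Finset ι) (f : ι → Fin k → ℝ) :
    norm2 (∑ j ∈ s, f j) ≤ ∑ j ∈ s, norm2 (f j) := by
  simpa [norm2_eq_norm, WithLp.toLp_sum] using
    norm_sum_le s fun j => (WithLp.toLp 2 (f j) : EuclideanSpace ℝ (Fin k))

lemma abs_dotProduct_le (u v : Fin k → ℝ) : |u ⬝ᵥ v| ≤ norm2 u * norm2 v := by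
  simpa [norm2_eq_norm, EuclideanSpace.inner_toLp_toLp, dotProduct_comm] using
    abs_real_inner_le_norm (WithLp.toLp 2 u : EuclideanSpace ℝ (Fin k)) (WithLp.toLp 2 v)

lemma norm2_le_of_sq_le {v : Fin k → ℝ} {c : ℝ} (hc : 0 ≤ c) (h : v ⬝ᵥ v ≤ c ^ 2) :
    norm2 v ≤ c :=
  (pow_le_pow_iff_left₀ (norm2_nonneg v) hc two_ne_zero).1 (by rwa [sq_norm2])

lemma mem_spt {v : Fin k → ℝ} {i : Fin k} : i ∈ spt v ↔ v i ≠ 0 := by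
  simp [spt]

lemma spt_add_subset (u v : Fin k → ℝ) : spt (u + v) ⊆ spt u ∪ spt v := by
  intro i
  simp only [mem_spt, mem_union, Pi.add_apply]
  contrapose!
  rintro ⟨hu, hv⟩
  simp [hu, hv]

lemma spt_smul_subset (c : ℝ) (v : Fin k → ℝ) : spt (c • v) ⊆ spt v := by
  intro i
  simp only [mem_spt, Pi.smul_apply, smul_eq_mul]
  exact right_ne_zero_of_mul

lemma spt_restr_subset (T : Finset (Fin k)) (v : Fin k → ℝ) : spt (restr T v) ⊆ T := by
  intro i
  simp only [mem_spt, restr]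
  contrapose!
  exact fun hi => if_neg hi

lemma dotProduct_eq_zero_of_disjoint {u v : Fin k → ℝ} (h : Disjoint (spt u) (spt v)) :
    u ⬝ᵥ v = 0 := by
  refine Finset.sum_eq_zero fun i _ => ?_
  by_contra hi
  exact disjoint_left.1 h (mem_spt.2 (left_ne_zero_of_mul hi)) (mem_spt.2 (right_ne_zero_of_mul hi))

lemma sq_norm2_add_of_disjoint {u v : Fin k → ℝ} (h : Disjoint (spt u) (spt v)) :
    norm2 (u + v) ^ 2 = norm2 u ^ 2 + norm2 v ^ 2 := by
  simp only [sq_norm2, add_dotProduct, dotProduct_add, dotProduct_eq_zero_of_disjoint h,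
    dotProduct_eq_zero_of_disjoint h.symm]
  ring

lemma sq_norm2_restr (T : Finset (Fin k)) (v : Fin k → ℝ) :
    norm2 (restr T v) ^ 2 = ∑ i ∈ T, v i ^ 2 := by
  simp [sq_norm2, dotProduct, restr, ← sq, ite_pow]

lemma restr_add_restr_compl (T : Finset (Fin k)) (v : Fin k → ℝ) :
    restr T v + restr Tᶜ v = v := by
  ext i
  by_cases hi : i ∈ T <;> simp [restr, hi]

lemma restr_biUnion {ι : Type*} {J : Finset ι} {B : ι → Finset (Fin k)}
    (h : (J : Set ι).PairwiseDisjoint B) (v : Fin k → ℝ) :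
    restr (J.biUnion B) v = ∑ j ∈ J, restr (B j) v := by
  ext i
  have := Finset.indicator_biUnion_apply J (fun j => (B j : Set (Fin k))) (f := v)
    (fun a ha b hb hab => Finset.disjoint_coe.2 (h ha hb hab)) i
  simpa [restr, Set.indicator_apply] using this

lemma card_spt_add_le {S : ℕ} {u v : Fin k → ℝ} (hu : (spt u).card ≤ S)
    (hv : (spt v).card ≤ S) :
    (spt (u + v)).card ≤ 2 * S := by
  have := (card_le_card (spt_add_subset u v)).trans (card_union_le _ _)
  omega

lemma sum_abs_le_sqrt_card_mul_norm2_restr (T : Finset (Fin k)) (v : Fin k → ℝ) :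
    ∑ i ∈ T, |v i| ≤ √T.card * norm2 (restr T v) := by
  rw [← Real.sqrt_sq (norm2_nonneg _), ← Real.sqrt_mul (Nat.cast_nonneg _), sq_norm2_restr]
  refine Real.le_sqrt_of_sq_le ?_
  simpa using sq_sum_le_card_mul_sum_sq (s := T) (f := fun i => |v i|)

end Support

section Blocks

variable {α : Type*} {K : ℕ}

lemma exists_antitone_enum (s : Finset α) (f : α → ℝ) :
    ∃ e : Fin s.card ↪ α, univ.map e = s ∧ Antitone (f ∘ e) := by
  let e₀ : Fin s.card ≃ s := s.equivFin.symm
  let σ := Tuple.sort fun p => OrderDual.toDual (f (e₀ p))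
  refine ⟨(σ.toEmbedding.trans e₀.toEmbedding).trans (Function.Embedding.subtype _), ?_, ?_⟩
  · ext a
    simp only [mem_map, mem_univ, true_and, Function.Embedding.trans_apply,
      Equiv.coe_toEmbedding, Function.Embedding.subtype_apply]
    exact ⟨fun ⟨p, hp⟩ => hp ▸ (e₀ (σ p)).2,
      fun ha => ⟨σ.symm (e₀.symm ⟨a, ha⟩), by simp⟩⟩
  · exact monotone_toDual_comp_iff.1 (Tuple.monotone_sort fun p => OrderDual.toDual (f (e₀ p)))

variable (e : Fin K ↪ α) (S : ℕ)

def block (j : ℕ) : Finset α := (univ.filter fun p : Fin K => (p : ℕ) / S = j).map e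

variable {e S}

lemma mem_block {a : α} {j : ℕ} :
    a ∈ block e S j ↔ ∃ p : Fin K, (p : ℕ) / S = j ∧ e p = a := by
  simp [block]

lemma card_block_le (hS : 0 < S) (j : ℕ) : (block e S j).card ≤ S := by
  rw [block, card_map]
  refine (card_le_card_of_injOn (fun p : Fin K => (p : ℕ)) (t := Ico (j * S) (j * S + S)) ?_
    Fin.val_injective.injOn).trans (by simp)
  intro p hp
  simp only [coe_filter, mem_univ, true_and, Set.mem_ofPred_eq] at hp
  have h₁ := Nat.div_mul_le_self p S
  have h₂ := Nat.lt_div_mul_add (a := p) hS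
  rw [hp] at h₁ h₂
  simp only [coe_Ico, Set.mem_Ico]
  omega

lemma le_card_block {j : ℕ} (hK : j * S + S ≤ K) : S ≤ (block e S j).card := by
  rw [block, card_map]
  refine (card_le_card_of_injOn (fun t : Fin S => Fin.castLE hK (Fin.natAdd (j * S) t))
    (s := univ) ?_ ?_).trans_eq' (by simp)
  · intro t _
    simp only [coe_filter, mem_univ, true_and, Set.mem_ofPred_eq, Fin.val_castLE, Fin.val_natAdd]
    exact Nat.div_eq_of_lt_le (by omega) (by have := t.2; rw [add_mul]; omega)
  · intro t _ t' _ h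
    simpa [Fin.ext_iff] using h

lemma le_card_block_of_mem_succ {a : α} {j : ℕ} (ha : a ∈ block e S (j + 1)) :
    S ≤ (block e S j).card := by
  obtain ⟨p, hp, -⟩ := mem_block.1 ha
  refine le_card_block ?_
  have := Nat.div_mul_le_self p S
  rw [hp] at this
  have := p.2
  rw [add_mul] at *
  omega

lemma disjoint_block {i j : ℕ} (hij : i ≠ j) : Disjoint (block e S i) (block e S j) :=
  (disjoint_map e).2 (disjoint_filter.2 fun _ _ hi hj => hij (hi.symm.trans hj))

lemma biUnion_block [DecidableEq α] : (range (K + 1)).biUnion (block e S) = univ.map e := by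
  ext a
  simp only [mem_biUnion, mem_range, mem_block, mem_map, mem_univ, true_and]
  exact ⟨fun ⟨_, _, p, _, hp⟩ => ⟨p, hp⟩,
    fun ⟨p, hp⟩ => ⟨_, (Nat.div_le_self p S).trans_lt (by omega), p, rfl, hp⟩⟩

lemma le_of_mem_block_succ {f : α → ℝ} (hf : Antitone (f ∘ e)) {a b : α} {j : ℕ}
    (ha : a ∈ block e S (j + 1)) (hb : b ∈ block e S j) : f a ≤ f b := by
  obtain ⟨p, hp, rfl⟩ := mem_block.1 ha
  obtain ⟨q, hq, rfl⟩ := mem_block.1 hb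
  exact hf (Nat.lt_of_div_lt_div (c := S) (by omega)).le

end Blocks

section Shelling

variable {k : ℕ}

lemma sqrt_mul_norm2_restr_le {B B' : Finset (Fin k)} {v : Fin k → ℝ} {S : ℕ}
    (hB' : B'.card ≤ S) (hB : S ≤ B.card) (hdom : ∀ a ∈ B', ∀ b ∈ B, |v a| ≤ |v b|) :
    √S * norm2 (restr B' v) ≤ ∑ i ∈ B, |v i| := by
  set L := ∑ i ∈ B, |v i|
  have hL : 0 ≤ L := sum_nonneg fun _ _ => abs_nonneg _
  rcases S.eq_zero_or_pos with rfl | hS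
  · simpa using hL
  have hpt : ∀ a ∈ B', S * |v a| ≤ L := fun a ha =>
    calc (S : ℝ) * |v a| ≤ B.card • |v a| := by
          rw [nsmul_eq_mul]; gcongr
      _ ≤ L := card_nsmul_le_sum _ _ _ (hdom a ha)
  have hsq : S * (S * norm2 (restr B' v) ^ 2) ≤ S * L ^ 2 :=
    calc (S : ℝ) * (S * norm2 (restr B' v) ^ 2) = ∑ a ∈ B', (S * |v a|) ^ 2 := by
          simp_rw [sq_norm2_restr, mul_sum, mul_pow, sq_abs, ← mul_assoc, ← sq]
      _ ≤ ∑ _a ∈ B', L ^ 2 :=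
          sum_le_sum fun a ha => pow_le_pow_left₀ (by positivity) (hpt a ha) 2
      _ ≤ S * L ^ 2 := by
          rw [sum_const, nsmul_eq_mul]; gcongr
  refine (pow_le_pow_iff_left₀ (by positivity [norm2_nonneg (restr B' v)]) hL two_ne_zero).1 ?_
  rw [mul_pow, Real.sq_sqrt (Nat.cast_nonneg S)]
  exact le_of_mul_le_mul_left hsq (by exact_mod_cast hS)

lemma exists_sorted_blocks (s : Finset (Fin k)) (v : Fin k → ℝ) {S : ℕ} (hS : 0 < S) :
    ∃ (B : ℕ → Finset (Fin k)) (K : ℕ), (∀ j, B j ⊆ s) ∧ (∀ j, (B j).card ≤ S) ∧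
      Pairwise (Disjoint on B) ∧ restr s v = ∑ j ∈ range (K + 1), restr (B j) v ∧
      √S * ∑ j ∈ range K, norm2 (restr (B (j + 1)) v) ≤ ∑ i ∈ s, |v i| := by
  obtain ⟨e, hes, he⟩ := exists_antitone_enum s fun i => |v i|
  have hdisj : Pairwise (Disjoint on block e S) := fun i j hij => disjoint_block hij
  have hunion : (range (s.card + 1)).biUnion (block e S) = s := biUnion_block.trans hes
  refine ⟨block e S, s.card, fun j => ?_, card_block_le hS, hdisj, ?_, ?_⟩
  · exact (map_subset_map.2 (filter_subset _ _)).trans hes.subset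
  · rw [← restr_biUnion (hdisj.set_pairwise _), hunion]
  · calc √S * ∑ j ∈ range s.card, norm2 (restr (block e S (j + 1)) v)
        ≤ ∑ j ∈ range s.card, ∑ i ∈ block e S j, |v i| := by
          rw [mul_sum]
          refine sum_le_sum fun j _ => ?_
          rcases (block e S (j + 1)).eq_empty_or_nonempty with hempty | ⟨a, ha⟩
          · simpa [hempty, restr, norm2] using sum_nonneg fun _ _ => abs_nonneg _
          · exact sqrt_mul_norm2_restr_le (card_block_le hS _) (le_card_block_of_mem_succ ha)
              fun a ha b hb => le_of_mem_block_succ he ha hb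
      _ ≤ ∑ j ∈ range (s.card + 1), ∑ i ∈ block e S j, |v i| :=
          sum_le_sum_of_subset_of_nonneg (range_subset_range.2 (by omega))
            fun _ _ _ => sum_nonneg fun _ _ => abs_nonneg _
      _ = ∑ i ∈ s, |v i| := by rw [← sum_biUnion (hdisj.set_pairwise _), hunion]

end Shelling

lemma add_le_sqrt_two_mul_of_sq_eq {a b N : ℝ} (hN : N ^ 2 = a ^ 2 + b ^ 2) (hN0 : 0 ≤ N) :
    a + b ≤ √2 * N := by
  refine abs_le_of_sq_le_sq' ?_ (by positivity) |>.2
  rw [mul_pow, Real.sq_sqrt zero_le_two]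
  nlinarith [sq_nonneg (a - b)]

namespace RIPBound

variable {n m S : ℕ} {A : Matrix (Fin n) (Fin m) ℝ} {δ : ℝ}

lemma le_sq_norm2_mulVec (hA : RIPBound A S δ) {z : Fin m → ℝ} (hz : (spt z).card ≤ S) :
    (1 - δ) * norm2 z ^ 2 ≤ norm2 (A *ᵥ z) ^ 2 := by
  simpa [sq_norm2, dotProduct, ← sq] using (hA.2.2 z hz).1

lemma sq_norm2_mulVec_le (hA : RIPBound A S δ) {z : Fin m → ℝ} (hz : (spt z).card ≤ S) :
    norm2 (A *ᵥ z) ^ 2 ≤ (1 + δ) * norm2 z ^ 2 := by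
  simpa [sq_norm2, dotProduct, ← sq] using (hA.2.2 z hz).2

lemma norm2_mulVec_le (hA : RIPBound A S δ) {z : Fin m → ℝ} (hz : (spt z).card ≤ S) :
    norm2 (A *ᵥ z) ≤ √(1 + δ) * norm2 z := by
  refine norm2_le_of_sq_le (mul_nonneg (Real.sqrt_nonneg _) (norm2_nonneg z)) ?_
  rw [← sq_norm2, mul_pow, Real.sq_sqrt (by linarith [hA.2.1, hA.1])]
  exact hA.sq_norm2_mulVec_le hz

/-- Restricted orthogonality from the restricted isometry property, by polarization on
`‖v‖ u ± ‖u‖ v`, both of which have norm `√2 ‖u‖ ‖v‖`. -/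
lemma abs_dotProduct_mulVec_le (hA : RIPBound A S δ) {u v : Fin m → ℝ}
    (huv : Disjoint (spt u) (spt v)) (hS : (spt u).card + (spt v).card ≤ S) :
    |(A *ᵥ u) ⬝ᵥ (A *ᵥ v)| ≤ δ * norm2 u * norm2 v := by
  rcases (mul_nonneg (norm2_nonneg u) (norm2_nonneg v)).eq_or_lt with huv0 | huv0
  · rcases mul_eq_zero.1 huv0.symm with hu | hv
    · rw [hu]; simp [norm2_eq_zero.1 hu]
    · rw [hv]; simp [norm2_eq_zero.1 hv]
  set a := norm2 v
  set b := norm2 u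
  have hcard : ∀ c : ℝ, (spt (a • u + c • v)).card ≤ S := fun c =>
    ((card_le_card ((spt_add_subset _ _).trans
      (union_subset_union (spt_smul_subset a u) (spt_smul_subset c v)))).trans
      (card_union_le _ _)).trans hS
  have hnorm (c : ℝ) : norm2 (a • u + c • v) ^ 2 = a ^ 2 * b ^ 2 + c ^ 2 * a ^ 2 := by
    rw [sq_norm2_add_of_disjoint (huv.mono (spt_smul_subset a u) (spt_smul_subset c v)),
      norm2_smul, norm2_smul, mul_pow, mul_pow, sq_abs, sq_abs]
  have hpolar (c : ℝ) : norm2 (A *ᵥ (a • u + c • v)) ^ 2 = a ^ 2 * norm2 (A *ᵥ u) ^ 2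
      + 2 * a * c * ((A *ᵥ u) ⬝ᵥ (A *ᵥ v)) + c ^ 2 * norm2 (A *ᵥ v) ^ 2 := by
    simp only [sq_norm2, Matrix.mulVec_add, Matrix.mulVec_smul, add_dotProduct, dotProduct_add,
      smul_dotProduct, dotProduct_smul, dotProduct_comm (A *ᵥ v) (A *ᵥ u), smul_eq_mul]
    ring
  have hup : ∀ c : ℝ, norm2 (A *ᵥ (a • u + c • v)) ^ 2
      ≤ (1 + δ) * (a ^ 2 * b ^ 2 + c ^ 2 * a ^ 2) := fun c =>
    hnorm c ▸ hA.sq_norm2_mulVec_le (hcard c)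
  have hlow : ∀ c : ℝ, (1 - δ) * (a ^ 2 * b ^ 2 + c ^ 2 * a ^ 2)
      ≤ norm2 (A *ᵥ (a • u + c • v)) ^ 2 := fun c =>
    hnorm c ▸ hA.le_sq_norm2_mulVec (hcard c)
  have hab : 0 < a * b := by rw [mul_comm]; exact huv0
  rw [abs_le]
  constructor
  · refine le_of_mul_le_mul_left ?_ hab
    linarith [hup (-b), hlow b, hpolar b, hpolar (-b)]
  · refine le_of_mul_le_mul_left ?_ hab
    linarith [hup b, hlow (-b), hpolar b, hpolar (-b)]

lemma one_sub_mul_sq_norm2_le (hA : RIPBound A (2 * S) δ) {u u' : Fin m → ℝ} {J : Finset ℕ}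
    {g : ℕ → Fin m → ℝ} (hu : (spt u).card ≤ S) (hu' : (spt u').card ≤ S)
    (hg : ∀ j ∈ J, (spt (g j)).card ≤ S) (hug : ∀ j ∈ J, Disjoint (spt u) (spt (g j)))
    (hu'g : ∀ j ∈ J, Disjoint (spt u') (spt (g j))) :
    (1 - δ) * norm2 (u + u') ^ 2
      ≤ √(1 + δ) * norm2 (u + u') * norm2 (A *ᵥ (u + u' + ∑ j ∈ J, g j))
        + δ * (norm2 u + norm2 u') * ∑ j ∈ J, norm2 (g j) := by
  have hcard := card_spt_add_le hu hu'
  have hcross : ∀ j ∈ J, |(A *ᵥ (u + u')) ⬝ᵥ (A *ᵥ g j)|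
      ≤ δ * (norm2 u + norm2 u') * norm2 (g j) := fun j hj => by
    rw [Matrix.mulVec_add, add_dotProduct, mul_add, add_mul]
    refine (abs_add_le _ _).trans (add_le_add ?_ ?_)
    · exact hA.abs_dotProduct_mulVec_le (hug j hj) (by linarith [hg j hj])
    · exact hA.abs_dotProduct_mulVec_le (hu'g j hj) (by linarith [hg j hj])
  have hsplit : (A *ᵥ (u + u')) ⬝ᵥ (A *ᵥ (u + u' + ∑ j ∈ J, g j))
      = norm2 (A *ᵥ (u + u')) ^ 2 + ∑ j ∈ J, (A *ᵥ (u + u')) ⬝ᵥ (A *ᵥ g j) := by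
    rw [sq_norm2, Matrix.mulVec_add _ (u + u'), dotProduct_add, Matrix.mulVec_sum, dotProduct_sum]
  have hmain : (A *ᵥ (u + u')) ⬝ᵥ (A *ᵥ (u + u' + ∑ j ∈ J, g j))
      ≤ √(1 + δ) * norm2 (u + u') * norm2 (A *ᵥ (u + u' + ∑ j ∈ J, g j)) :=
    (le_abs_self _).trans <| (abs_dotProduct_le _ _).trans <|
      mul_le_mul_of_nonneg_right (hA.norm2_mulVec_le hcard) (norm2_nonneg _)
  have htail : -∑ j ∈ J, (A *ᵥ (u + u')) ⬝ᵥ (A *ᵥ g j)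
      ≤ δ * (norm2 u + norm2 u') * ∑ j ∈ J, norm2 (g j) := by
    rw [mul_sum, ← sum_neg_distrib]
    exact sum_le_sum fun j hj => (neg_le_abs _).trans (hcross j hj)
  linarith [hA.le_sq_norm2_mulVec hcard]

lemma mul_norm2_le_of_decomposition (hA : RIPBound A (2 * S) δ) {u u' : Fin m → ℝ}
    {J : Finset ℕ} {g : ℕ → Fin m → ℝ} (huu' : Disjoint (spt u) (spt u'))
    (hu : (spt u).card ≤ S) (hu' : (spt u').card ≤ S) (hg : ∀ j ∈ J, (spt (g j)).card ≤ S)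
    (hug : ∀ j ∈ J, Disjoint (spt u) (spt (g j)))
    (hu'g : ∀ j ∈ J, Disjoint (spt u') (spt (g j)))
    (hρ : ∑ j ∈ J, norm2 (g j) ≤ norm2 u) :
    (1 - (√2 + 1) * δ) * norm2 (u + u' + ∑ j ∈ J, g j)
      ≤ 2 * √(1 + δ) * norm2 (A *ᵥ (u + u' + ∑ j ∈ J, g j)) := by
  have key := hA.one_sub_mul_sq_norm2_le hu hu' hg hug hu'g
  set η := norm2 (A *ᵥ (u + u' + ∑ j ∈ J, g j))
  set N := norm2 (u + u')
  set ρ := ∑ j ∈ J, norm2 (g j)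
  have hN0 : 0 ≤ N := norm2_nonneg _
  have hρ0 : 0 ≤ ρ := sum_nonneg fun _ _ => norm2_nonneg _
  have hN : N ^ 2 = norm2 u ^ 2 + norm2 u' ^ 2 := sq_norm2_add_of_disjoint huu'
  have huN : norm2 u ≤ N :=
    abs_le_of_sq_le_sq' (by nlinarith [sq_nonneg (norm2 u')]) hN0 |>.2
  have hcross : δ * (norm2 u + norm2 u') * ρ ≤ √2 * δ * N ^ 2 := by
    have := mul_le_mul (add_le_sqrt_two_mul_of_sq_eq hN hN0) (hρ.trans huN) hρ0 (by positivity)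
    nlinarith [hA.1]
  have hcN : (1 - (√2 + 1) * δ) * N ≤ √(1 + δ) * η := by
    rcases hN0.eq_or_lt with hN0 | hN0
    · rw [← hN0, mul_zero]; exact mul_nonneg (Real.sqrt_nonneg _) (norm2_nonneg _)
    · exact le_of_mul_le_mul_right (by nlinarith) hN0
  have hhN : norm2 (u + u' + ∑ j ∈ J, g j) ≤ 2 * N := by
    linarith [norm2_add_le (u + u') (∑ j ∈ J, g j), norm2_sum_le J g]
  rcases le_or_gt (1 - (√2 + 1) * δ) 0 with hc | hc
  · exact (mul_nonpos_of_nonpos_of_nonneg hc (norm2_nonneg _)).trans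
      (mul_nonneg (by positivity) (norm2_nonneg _))
  · nlinarith

theorem mul_norm2_le_of_cone {T : Finset (Fin m)} (hA : RIPBound A (2 * T.card) δ)
    {h : Fin m → ℝ} (hcone : ∑ i ∈ Tᶜ, |h i| ≤ ∑ i ∈ T, |h i|) :
    (1 - (√2 + 1) * δ) * norm2 h ≤ 2 * √(1 + δ) * norm2 (A *ᵥ h) := by
  rcases T.eq_empty_or_nonempty with rfl | hT
  · have h0 : h = 0 := by
      ext i
      simpa using (sum_eq_zero_iff_of_nonneg fun i _ => abs_nonneg (h i)).1
        (le_antisymm (by simpa using hcone) (sum_nonneg fun i _ => abs_nonneg _)) i (mem_univ i)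
    simp [h0, norm2]
  obtain ⟨B, K, hBs, hBcard, hBdisj, hdecomp, htail⟩ := exists_sorted_blocks Tᶜ h hT.card_pos
  have hh : h = restr T h + restr (B 0) h + ∑ j ∈ range K, restr (B (j + 1)) h := by
    conv_lhs => rw [← restr_add_restr_compl T h, hdecomp, sum_range_succ']
    abel
  have hTB : ∀ j, Disjoint T (B j) := fun j => disjoint_compl_right.mono_right (hBs j)
  have hspt := spt_restr_subset (k := m) (v := h)
  rw [hh]
  refine hA.mul_norm2_le_of_decomposition ((hTB 0).mono (hspt _) (hspt _))
    (card_le_card (hspt _)) ((card_le_card (hspt _)).trans (hBcard 0))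
    (fun j _ => (card_le_card (hspt _)).trans (hBcard _))
    (fun j _ => (hTB (j + 1)).mono (hspt _) (hspt _))
    (fun j _ => (hBdisj (by omega : 0 ≠ j + 1)).mono (hspt _) (hspt _)) ?_
  refine le_of_mul_le_mul_left ?_ (Real.sqrt_pos.2 (Nat.cast_pos.2 hT.card_pos))
  exact htail.trans (hcone.trans (sum_abs_le_sqrt_card_mul_norm2_restr T h))

end RIPBound

lemma sum_compl_abs_sub_le {k : ℕ} {T : Finset (Fin k)} {x x' : Fin k → ℝ}
    (hx : ∀ i ∉ T, x i = 0) (hl1 : ∑ i, |x' i| ≤ ∑ i, |x i|) :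
    ∑ i ∈ Tᶜ, |(x - x') i| ≤ ∑ i ∈ T, |(x - x') i| := by
  rw [← sum_add_sum_compl T, ← sum_add_sum_compl T fun i => |x i|] at hl1
  have hoff : ∑ i ∈ Tᶜ, |x' i| = ∑ i ∈ Tᶜ, |(x - x') i| :=
    sum_congr rfl fun i hi => by simp [hx i (mem_compl.1 hi)]
  have hoff' : ∑ i ∈ Tᶜ, |x i| = 0 := sum_eq_zero fun i hi => by simp [hx i (mem_compl.1 hi)]
  have hon : ∑ i ∈ T, |x i| ≤ ∑ i ∈ T, |x' i| + ∑ i ∈ T, |(x - x') i| := by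
    rw [← sum_add_distrib]
    exact sum_le_sum fun i _ => by
      rw [Pi.sub_apply]; linarith [abs_sub_abs_le_abs_sub (x i) (x' i)]
  linarith

lemma norm2_mulVec_sub_le {n m : ℕ} {A : Matrix (Fin n) (Fin m) ℝ} {y : Fin n → ℝ}
    {x x' : Fin m → ℝ} {ε : ℝ} (hx : norm2 (y - A *ᵥ x) ≤ ε)
    (hx' : norm2 (y - A *ᵥ x') ≤ ε) :
    norm2 (A *ᵥ (x - x')) ≤ 2 * ε := by
  have : A *ᵥ (x - x') = (y - A *ᵥ x') - (y - A *ᵥ x) := by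
    rw [Matrix.mulVec_sub]; abel
  rw [this]
  linarith [norm2_sub_le (y - A *ᵥ x') (y - A *ᵥ x)]

lemma one_half_lt_one_sub_mul {δ : ℝ} (hδ : δ < (√2 - 1) / 2) :
    1 / 2 < 1 - (√2 + 1) * δ := by
  have h : (√2 + 1) * ((√2 - 1) / 2) = 1 / 2 := by
    ring_nf; rw [Real.sq_sqrt zero_le_two]; norm_num
  nlinarith [mul_lt_mul_of_pos_left hδ (by positivity : 0 < √2 + 1)]

lemma C1_le {δ : ℝ} (hδ : δ < (√2 - 1) / 2) : C1 δ ≤ 8.79 := by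
  have hsqrt2 : √2 < 1.4143 := (Real.sqrt_lt' (by norm_num)).2 (by norm_num)
  have hsqrt : √(1 + δ) ≤ 1.09875 :=
    Real.sqrt_le_iff.2 ⟨by norm_num, by nlinarith⟩
  calc C1 δ ≤ 4 * √(1 + δ) / (1 / 2) :=
        div_le_div_of_nonneg_left (by positivity) (by norm_num) (one_half_lt_one_sub_mul hδ).le
    _ ≤ 8.79 := by linarith

/-- The `ℓ¹` minimizer over the feasible set is encoded as a modified-CS estimate with known
part `∅`. -/
theorem cs_error_bound {n m : ℕ} (A : Matrix (Fin n) (Fin m) ℝ)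
    (x : Fin m → ℝ) (w : Fin n → ℝ) (ε δ : ℝ)
    (hw : norm2 w ≤ ε)
    (hδ : δ < (Real.sqrt 2 - 1) / 2)
    (hRIP : RIPBound A (2 * (spt x).card) δ)
    (xhat : Fin m → ℝ)
    (hxhat : ModCS A (fun j => (A.mulVec x) j + w j) ε (∅ : Finset (Fin m)) xhat) :
    norm2 (fun i => x i - xhat i) ≤ C1 δ * ε ∧ C1 δ * ε ≤ 8.79 * ε := by
  have hε : 0 ≤ ε := (norm2_nonneg w).trans hw
  have hx : norm2 ((A *ᵥ x + w) - A *ᵥ x) ≤ ε := by rwa [add_sub_cancel_left]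
  have hcone : ∑ i ∈ (spt x)ᶜ, |(x - xhat) i| ≤ ∑ i ∈ spt x, |(x - xhat) i| :=
    sum_compl_abs_sub_le (fun i hi => by simpa [spt] using hi) (by simpa using hxhat.2 x hx)
  have htube : norm2 (A *ᵥ (x - xhat)) ≤ 2 * ε := norm2_mulVec_sub_le hx hxhat.1
  refine ⟨?_, mul_le_mul_of_nonneg_right (C1_le hδ) hε⟩
  rw [C1, div_mul_eq_mul_div, le_div_iff₀ (by linarith [one_half_lt_one_sub_mul hδ])]
  calc norm2 (x - xhat) * (1 - (√2 + 1) * δ)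
      ≤ 2 * √(1 + δ) * norm2 (A *ᵥ (x - xhat)) := by
        rw [mul_comm]; exact hRIP.mul_norm2_le_of_cone hcone
    _ ≤ 2 * √(1 + δ) * (2 * ε) := by gcongr
    _ = 4 * √(1 + δ) * ε := by ring
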